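/- If labeled posets (P,ω) and (Q,τ) satisfy supp_F(P,ω) ⊆ supp_F(Q,τ), then the maximum number of strict edges in a maximal chain of (P,ω) is greater than or equal to the maximum number of strict edges in a maximal chain of (Q,τ); likewise, the maximum number of weak edges in a maximal chain of (P,ω) is greater than or equal to the maximum number of weak edges in a maximal chain of (Q,τ). -/

import Mathlib

open scoped BigOperators

section CommonDefs

variable {α : Type*}

/-- A `(P,ω)`-partition: an order-preserving map from the poset to the positive
integers (encoded in `ℕ`, all values `≥ 1`), strictly increasing along strict edges. -/
def IsPPart [PartialOrder α] (ω : α → ℕ) (f : α → ℕ) : Prop :=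
  (∀ p, 1 ≤ f p) ∧ (∀ a b : α, a < b → f a ≤ f b) ∧
    ∀ a b : α, a < b → ω b < ω a → f a < f b

/-- The `(P,ω)`-partition enumerator `K_{(P,ω)}` as a formal power series in the
variables `x_1, x_2, …` (the variable indexed by `i : ℕ` stands for `x_{i+1}`). -/
noncomputable def Kgen [PartialOrder α] (ω : α → ℕ) : MvPowerSeries ℕ ℚ :=
  fun d => (Set.ncard {f : α → ℕ |
    IsPPart ω f ∧ ∀ i : ℕ, Set.ncard {p : α | f p = i + 1} = d i} : ℚ)

/-- `K_{(P,ω)}` for a labeling by `Fin n`. -/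
noncomputable def Kω [PartialOrder α] {n : ℕ} (ω : α ≃ Fin n) : MvPowerSeries ℕ ℚ :=
  Kgen fun p => ((ω p : ℕ))

open Classical in
/-- The monomial quasisymmetric function `M_α`. -/
noncomputable def Mgen {n : ℕ} (c : Composition n) : MvPowerSeries ℕ ℚ :=
  fun d => if (∃ g : Fin c.length → ℕ, StrictMono g ∧
      d = ∑ j : Fin c.length, Finsupp.single (g j) (c.blocksFun j)) then 1 else 0

/-- The partial-sum set `S(α) ⊆ {1,…,n−1}` of a composition of `n`. -/
def compS {n : ℕ} (c : Composition n) : Finset ℕ :=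
  (Finset.range (c.length - 1)).image fun i => c.sizeUpTo (i + 1)

open Classical in
/-- `F_{S,n} = Σ_{S ⊆ T ⊆ [n-1]} M_{T,n}`. -/
noncomputable def FgenSet (n : ℕ) (S : Finset ℕ) : MvPowerSeries ℕ ℚ :=
  ∑ c : Composition n, if S ⊆ compS c then Mgen c else 0

/-- The fundamental quasisymmetric function `F_α`. -/
noncomputable def Fgen {n : ℕ} (c : Composition n) : MvPowerSeries ℕ ℚ :=
  FgenSet n (compS c)

/-- `e : Fin n ≃ α` is a listing of the elements of the poset compatible with the order. -/
def IsLinext [PartialOrder α] {n : ℕ} (e : Fin n ≃ α) : Prop :=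
  ∀ i j : Fin n, e i < e j → i < j

/-- The set `L(P,ω)` of linear extensions, regarded as words (permutations of `Fin n`). -/
def Linext [PartialOrder α] {n : ℕ} (ω : α ≃ Fin n) : Set (Fin n → Fin n) :=
  {w | ∃ e : Fin n ≃ α, IsLinext e ∧ w = fun i => ω (e i)}

open Classical in
/-- Descent set of a word, with 1-based positions, a subset of `{1,…,n−1}`:
`i ∈ Des w` iff the letter in position `i` is greater than the letter in position `i+1`. -/
noncomputable def Des {n : ℕ} (w : Fin n → Fin n) : Finset ℕ :=
  (Finset.Ioo 0 n).filter fun i =>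
    ∃ hi : i < n, w ⟨i, hi⟩ < w ⟨i - 1, Nat.lt_of_le_of_lt (Nat.sub_le i 1) hi⟩

/-- The F-support: the set of descent compositions of linear extensions. -/
def suppF [PartialOrder α] {n : ℕ} (ω : α ≃ Fin n) : Set (Composition n) :=
  {c | ∃ w ∈ Linext ω, compS c = Des w}

/-- The M-support: compositions `α = (α_1,…,α_k)` realized as fiber sizes of a
`(P,ω)`-partition with all values at most `k`. -/
def suppM [PartialOrder α] {n : ℕ} (ω : α ≃ Fin n) : Set (Composition n) :=
  {c | ∃ f : α → ℕ, IsPPart (fun p => ((ω p : ℕ))) f ∧ (∀ p, f p ≤ c.length) ∧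
      ∀ i : Fin c.length, Set.ncard {p : α | f p = (i : ℕ) + 1} = c.blocksFun i}

/-- `A` is a non-negative linear combination of fundamental quasisymmetric functions. -/
def NonnegFComb (A : MvPowerSeries ℕ ℚ) : Prop :=
  ∃ (s : Finset ((n : ℕ) × Composition n)) (coef : ((n : ℕ) × Composition n) → ℚ),
    (∀ x, 0 ≤ coef x) ∧ A = ∑ x ∈ s, coef x • Fgen x.2

/-- `A` is a non-negative linear combination of monomial quasisymmetric functions. -/
def NonnegMComb (A : MvPowerSeries ℕ ℚ) : Prop :=
  ∃ (s : Finset ((n : ℕ) × Composition n)) (coef : ((n : ℕ) × Composition n) → ℚ),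
    (∀ x, 0 ≤ coef x) ∧ A = ∑ x ∈ s, coef x • Mgen x.2

/-- `A ≤_F B`. -/
def LeF (A B : MvPowerSeries ℕ ℚ) : Prop := NonnegFComb (B - A)

/-- `A ≤_M B`. -/
def LeM (A B : MvPowerSeries ℕ ℚ) : Prop := NonnegMComb (B - A)

/-- The order-reversing permutation of `Fin n`. -/
def finRevEquiv {n : ℕ} : Fin n ≃ Fin n :=
  ⟨Fin.rev, Fin.rev, Fin.rev_rev, Fin.rev_rev⟩

def barLabel {n : ℕ} (ω : α ≃ Fin n) : α ≃ Fin n := ω.trans finRevEquiv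

/-- The star involution: the dual poset with labels `ω*(a) = n+1−ω(a)`. -/
def starLabel {n : ℕ} (ω : α ≃ Fin n) : αᵒᵈ ≃ Fin n :=
  OrderDual.ofDual.trans (barLabel ω)

/-- The reverse of a composition. -/
def compRev {n : ℕ} (c : Composition n) : Composition n :=
  ⟨c.blocks.reverse, fun h => c.blocks_pos (List.mem_reverse.mp h), by
    rw [List.sum_reverse]; exact c.blocks_sum⟩

/-- A saturated chain from `b` down to a minimal element, listed from top to bottom. -/
def IsDownChain [PartialOrder α] (b : α) (l : List α) : Prop :=
  l ≠ [] ∧ l.head? = some b ∧ List.Chain' (fun x y => y ⋖ x) l ∧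
    ∀ x ∈ l.getLast?, IsMin x

/-- Number of strict edges in a top-to-bottom saturated chain. -/
def strictCountDown (ω : α → ℕ) (l : List α) : ℕ :=
  (l.zip l.tail).countP fun p => decide (ω p.1 < ω p.2)

/-- The jump of an element: the maximum number of strict edges on a saturated chain
from `b` down to a minimal element. -/
noncomputable def jumpOf [PartialOrder α] (ω : α → ℕ) (b : α) : ℕ :=
  sSup {k | ∃ l : List α, IsDownChain b l ∧ strictCountDown ω l = k}

/-- The maximum jump of an element. -/
noncomputable def maxJump [PartialOrder α] [Fintype α] (ω : α → ℕ) : ℕ :=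
  sSup {k | ∃ b : α, jumpOf ω b = k}

/-- The jump sequence `(j_0, …, j_k)` as a list. -/
noncomputable def jumpBlocks [PartialOrder α] [Fintype α] (ω : α → ℕ) : List ℕ :=
  (List.range (maxJump ω + 1)).map fun i => Set.ncard {b : α | jumpOf ω b = i}

/-- A maximal chain (saturated, from a minimal to a maximal element), bottom to top. -/
def IsMaxChainList [PartialOrder α] (l : List α) : Prop :=
  l ≠ [] ∧ List.Chain' (· ⋖ ·) l ∧ (∀ x ∈ l.head?, IsMin x) ∧ ∀ x ∈ l.getLast?, IsMax x

/-- Number of strict edges in a bottom-to-top saturated chain. -/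
def strictCountUp (ω : α → ℕ) (l : List α) : ℕ :=
  (l.zip l.tail).countP fun p => decide (ω p.2 < ω p.1)

/-- Number of weak edges in a bottom-to-top saturated chain. -/
def weakCountUp (ω : α → ℕ) (l : List α) : ℕ :=
  (l.zip l.tail).countP fun p => decide (ω p.1 < ω p.2)

/-- A weak convex subposet: convex, and all cover relations inside it are weak. -/
def IsWeakConvex [PartialOrder α] (ω : α → ℕ) (S : Set α) : Prop :=
  (∀ ⦃x y z : α⦄, x < y → y < z → x ∈ S → z ∈ S → y ∈ S) ∧
    ∀ a ∈ S, ∀ b ∈ S, a ⋖ b → ω a < ω b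

/-- The order relation of the assembled poset `𝒫[i → P_i]`. -/
def assembledLe {I : Type*} (PO : PartialOrder I) {X : I → Type*}
    (Pc : ∀ i, PartialOrder (X i)) (x y : Σ i, X i) : Prop :=
  PO.lt x.1 y.1 ∨ ∃ h : x.1 = y.1, (Pc y.1).le (h ▸ x.2) y.2

/-- The assembled poset `𝒫[i → P_i]` as a partial order on the disjoint union. -/
def assembledOrder {I : Type*} (PO : PartialOrder I) {X : I → Type*}
    (Pc : ∀ i, PartialOrder (X i)) : PartialOrder (Σ i, X i) := by
  letI : PartialOrder I := PO
  letI instX : ∀ i, PartialOrder (X i) := Pc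
  exact
  { le := assembledLe PO Pc
    lt := fun x y => assembledLe PO Pc x y ∧ ¬ assembledLe PO Pc y x
    lt_iff_le_not_ge := fun _ _ => Iff.rfl
    le_refl := fun x => Or.inr ⟨rfl, le_refl x.2⟩
    le_trans := by
      rintro ⟨i, p⟩ ⟨j, q⟩ ⟨k, r⟩ h1 h2
      rcases h1 with h1 | ⟨e1, h1⟩ <;> rcases h2 with h2 | ⟨e2, h2⟩
      · exact Or.inl (lt_trans h1 h2)
      · dsimp only at e2 h2 ⊢; subst e2; exact Or.inl h1
      · dsimp only at e1 h1 ⊢; subst e1; exact Or.inl h2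
      · dsimp only at e1 h1 e2 h2 ⊢; subst e1; subst e2
        exact Or.inr ⟨rfl, le_trans h1 h2⟩
    le_antisymm := by
      rintro ⟨i, p⟩ ⟨j, q⟩ h1 h2
      rcases h1 with h1 | ⟨e1, h1⟩ <;> rcases h2 with h2 | ⟨e2, h2⟩
      · exact absurd (lt_trans h1 h2) (lt_irrefl _)
      · dsimp only at e2 h2 ⊢; subst e2; exact absurd h1 (lt_irrefl _)
      · dsimp only at e1 h1 ⊢; subst e1; exact absurd h2 (lt_irrefl _)
      · dsimp only at e1 h1 e2 h2 ⊢; subst e1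
        obtain rfl : p = q := le_antisymm h1 h2
        rfl }

end CommonDefs

/-!
Both bounds go through linear extensions. If `w` is a linear extension of `(Q,τ)`, the number of
descents of `w` up to the position of an element grows weakly along the order of `Q` and strictly
along strict edges, so no maximal chain of `(Q,τ)` has more than `des w` strict edges. Conversely,
let `m` be the largest number of strict edges on a maximal chain of `(P,ω)`, and let `f b` be `m`
minus the largest number of strict edges on a saturated chain from `b` to a maximal element;
sorting `P` lexicographically by `(f, ω)` yields a linear extension with at most `m` descents.
`F`-support containment carries its descent set over to a linear extension of `(Q,τ)`, giving the
strict bound. Replacing each label `i` by `n + 1 - i` swaps strict and weak edges and complements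
descent sets, which turns the strict bound into the weak one.
-/

open Finset

section

variable {α β : Type*}

/-- A `(P,ω)`-partition that may also take the value `0`. -/
def IsNatPPart [Preorder α] (ω f : α → ℕ) : Prop :=
  Monotone f ∧ ∀ a b, a < b → ω b < ω a → f a < f b

theorem strictCountUp_cons_cons (ω : α → ℕ) (a b : α) (l : List α) :
    strictCountUp ω (a :: b :: l) = strictCountUp ω (b :: l) + if ω b < ω a then 1 else 0 := by
  simp [strictCountUp, List.countP_cons]

theorem strictCountUp_le_length (ω : α → ℕ) (l : List α) : strictCountUp ω l ≤ l.length :=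
  List.countP_le_length.trans (by simp)

section ChainCounts

variable [PartialOrder α]

theorem length_le_card_of_isChain_lt [Fintype α] {l : List α} (hl : l.IsChain (· < ·)) :
    l.length ≤ Fintype.card α :=
  (List.isChain_iff_pairwise.mp hl).nodup.length_le_card

theorem bddAbove_strictCountUp [Fintype α] (ω : α → ℕ) (P : List α → Prop)
    (hP : ∀ l, P l → l.IsChain (· < ·)) :
    BddAbove {k | ∃ l, P l ∧ strictCountUp ω l = k} :=
  ⟨Fintype.card α, by
    rintro k ⟨l, hl, rfl⟩
    exact (strictCountUp_le_length ω l).trans (length_le_card_of_isChain_lt (hP l hl))⟩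

theorem IsNatPPart.strictCountUp_cons_add_le {ω f : α → ℕ} (hf : IsNatPPart ω f) {M : ℕ}
    {a : α} {l : List α} (hl : (a :: l).IsChain (· < ·)) (hM : ∀ x ∈ a :: l, f x ≤ M) :
    strictCountUp ω (a :: l) + f a ≤ M := by
  induction l generalizing a with
  | nil => simpa [strictCountUp] using hM a (by simp)
  | cons b t ih =>
    obtain ⟨hab, hl⟩ := List.isChain_cons_cons.mp hl
    have hrest := ih hl fun x hx => hM x (List.mem_cons_of_mem a hx)
    have hweak := hf.1 hab.le
    have hstrict := hf.2 a b hab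
    rw [strictCountUp_cons_cons]
    split_ifs at hstrict ⊢ with h
    · have := hstrict h; omega
    · omega

theorem IsNatPPart.strictCountUp_le {ω f : α → ℕ} (hf : IsNatPPart ω f) {M : ℕ}
    (hM : ∀ x, f x ≤ M) {l : List α} (hl : l.IsChain (· < ·)) : strictCountUp ω l ≤ M := by
  cases l with
  | nil => simp [strictCountUp]
  | cons a l => exact le_of_add_le_left (hf.strictCountUp_cons_add_le hl fun x _ => hM x)

theorem isNatPPart_of_covBy [Finite α] {ω f : α → ℕ} (hmono : ∀ a b, a ⋖ b → f a ≤ f b)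
    (hstrict : ∀ a b, a ⋖ b → ω b < ω a → f a < f b) : IsNatPPart ω f := by
  have hlt : ∀ a b, a < b → f a ≤ f b ∧ (ω b < ω a → f a < f b) := by
    intro a
    induction a using WellFoundedGT.induction with
    | _ a ih =>
      intro b hab
      obtain ⟨c, hac, hcb⟩ := hab.exists_covby_le
      rcases hcb.eq_or_lt with rfl | hcb
      · exact ⟨hmono a c hac, hstrict a c hac⟩
      obtain ⟨hcb_mono, hcb_strict⟩ := ih c hac.lt b hcb
      refine ⟨(hmono a c hac).trans hcb_mono, fun hba => ?_⟩
      by_cases hca : ω c < ω a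
      · exact (hstrict a c hac hca).trans_le hcb_mono
      · exact (hmono a c hac).trans_lt (hcb_strict (by omega))
  refine ⟨fun a b hab => ?_, fun a b hab => (hlt a b hab).2⟩
  rcases hab.eq_or_lt with rfl | hab
  · exact le_rfl
  · exact (hlt a b hab).1

end ChainCounts

section Descents

variable {n : ℕ}

theorem succ_mem_Des_iff {w : Fin n → Fin n} {j : ℕ} (hj : j + 1 < n) :
    j + 1 ∈ Des w ↔ w ⟨j + 1, hj⟩ < w ⟨j, by omega⟩ := by
  simp [Des, hj]

theorem Des_subset_Ioo (w : Fin n → Fin n) : Des w ⊆ Ioo 0 n :=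
  filter_subset _ _

theorem exists_mem_Des_of_lt {w : Fin n → Fin n} {i j : Fin n} (hij : i < j) (hw : w j < w i) :
    ∃ k ∈ Des w, (i : ℕ) < k ∧ k ≤ j := by
  obtain ⟨j, hj⟩ := j
  induction j with
  | zero => exact absurd (Fin.lt_def.mp hij) (Nat.not_lt_zero _)
  | succ j ih =>
    by_cases hdes : w ⟨j + 1, hj⟩ < w ⟨j, by omega⟩
    · exact ⟨j + 1, (succ_mem_Des_iff hj).mpr hdes, hij, le_rfl⟩
    rcases (Fin.le_iff_val_le_val.mpr (Nat.lt_succ_iff.mp hij) : i ≤ ⟨j, by omega⟩).eq_or_lt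
      with heq | hij'
    · exact absurd (heq ▸ hw) hdes
    · obtain ⟨k, hk, hik, hkj⟩ := ih (by omega) hij' ((not_lt.mp hdes).trans_lt hw)
      exact ⟨k, hk, hik, by simp only at hkj ⊢; omega⟩

noncomputable def desCounter (w : Fin n → Fin n) (i : ℕ) : ℕ :=
  ((Des w).filter (· ≤ i)).card

theorem desCounter_mono (w : Fin n → Fin n) : Monotone (desCounter w) :=
  fun _ _ hij => card_le_card (monotone_filter_right _ fun _ _ hk => hk.trans hij)

theorem desCounter_le_card (w : Fin n → Fin n) (i : ℕ) : desCounter w i ≤ (Des w).card :=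
  card_le_card (filter_subset _ _)

theorem desCounter_lt_of_lt {w : Fin n → Fin n} {i j : Fin n} (hij : i < j) (hw : w j < w i) :
    desCounter w i < desCounter w j := by
  obtain ⟨k, hk, hik, hkj⟩ := exists_mem_Des_of_lt hij hw
  refine card_lt_card (ssubset_iff_of_subset (monotone_filter_right _ fun _ _ h => ?_) |>.mpr ?_)
  · exact h.trans (Fin.le_iff_val_le_val.mp hij.le)
  · exact ⟨k, mem_filter.mpr ⟨hk, hkj⟩, fun h => (mem_filter.mp h).2.not_gt hik⟩

theorem isNatPPart_desCounter [PartialOrder β] (τ : β ≃ Fin n) {e : Fin n ≃ β}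
    (he : IsLinext e) :
    IsNatPPart (fun b => (τ b : ℕ)) fun b => desCounter (fun i => τ (e i)) (e.symm b) := by
  have hpos : ∀ a b, a < b → e.symm a < e.symm b := fun a b hab => he _ _ (by simpa using hab)
  refine ⟨fun a b hab => ?_, fun a b hab hτ => ?_⟩
  · rcases hab.eq_or_lt with rfl | hab
    · exact le_rfl
    · exact desCounter_mono _ (Fin.le_iff_val_le_val.mp (hpos a b hab).le)
  · refine desCounter_lt_of_lt (hpos a b hab) ?_
    simpa only [Equiv.apply_symm_apply] using Fin.lt_def.mpr hτ

theorem strictCountUp_le_card_Des [PartialOrder β] (τ : β ≃ Fin n) {w : Fin n → Fin n}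
    (hw : w ∈ Linext τ) {l : List β} (hl : l.IsChain (· < ·)) :
    strictCountUp (fun b => (τ b : ℕ)) l ≤ (Des w).card := by
  obtain ⟨e, he, rfl⟩ := hw
  exact (isNatPPart_desCounter τ he).strictCountUp_le (fun _ => desCounter_le_card _ _) hl

theorem card_Des_le {w : Fin n → Fin n} {g : Fin n → ℕ} (hg : Monotone g)
    (hjump : ∀ i j, i < j → w j < w i → g i < g j) {M : ℕ} (hM : ∀ i, g i ≤ M) :
    (Des w).card ≤ M := by
  classical
  set T := univ.filter fun i : Fin n => ∃ h : (i : ℕ) + 1 < n, w ⟨i + 1, h⟩ < w i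
  have hsucc : ∀ i ∈ T, ∃ h : (i : ℕ) + 1 < n, g i < g ⟨i + 1, h⟩ := by
    intro i hi
    obtain ⟨h, hdes⟩ := (mem_filter.mp hi).2
    exact ⟨h, hjump _ _ (Fin.lt_def.mpr (Nat.lt_succ_self _)) hdes⟩
  have hDes : Des w ⊆ Finset.image (fun i : Fin n => (i : ℕ) + 1) T := by
    intro k hk
    obtain ⟨hk0, hkn⟩ := mem_Ioo.mp (Des_subset_Ioo w hk)
    obtain ⟨j, rfl⟩ : ∃ j, k = j + 1 := ⟨k - 1, by omega⟩
    exact mem_image.mpr ⟨⟨j, by omega⟩, mem_filter.mpr ⟨mem_univ _, hkn,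
      (succ_mem_Des_iff hkn).mp hk⟩, rfl⟩
  have hT : T.card ≤ M := by
    refine (card_le_card_of_injOn g (t := range M) (fun i hi => ?_) ?_).trans (card_range M).le
    · obtain ⟨h, hlt⟩ := hsucc i hi
      exact mem_range.mpr (hlt.trans_le (hM _))
    · refine StrictMonoOn.injOn fun i hi j hj hij => ?_
      obtain ⟨h, hlt⟩ := hsucc i hi
      exact hlt.trans_le (hg (Fin.le_iff_val_le_val.mpr (Fin.lt_def.mp hij)))
  exact (card_le_card hDes).trans (card_image_le.trans hT)

end Descents

/-- Sort lexicographically by `(f, ω)`: descents then occur only where `f` strictly increases. -/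
theorem exists_linext_card_Des_le [PartialOrder α] {n : ℕ} (ω : α ≃ Fin n) {f : α → ℕ}
    (hf : IsNatPPart (fun a => (ω a : ℕ)) f) {M : ℕ} (hM : ∀ a, f a ≤ M) :
    ∃ w ∈ Linext ω, (Des w).card ≤ M := by
  set key : Fin n → ℕ ×ₗ Fin n := fun i => toLex (f (ω.symm i), i)
  have key_lt : ∀ a b, a < b → key (ω a) < key (ω b) := by
    intro a b hab
    refine Prod.Lex.lt_iff.mpr ((hf.1 hab.le).lt_or_eq.imp (by simpa [key] using ·) fun heq => ?_)
    have hne : ω a ≠ ω b := ω.injective.ne hab.ne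
    have hle : ¬ (ω b : ℕ) < ω a := fun h => (hf.2 a b hab h).ne heq
    simpa [key, heq] using lt_of_le_of_ne (not_lt.mp hle) (Fin.val_injective.ne hne)
  set σ := Tuple.sort key
  have key_injective : Function.Injective key := fun i j h => congrArg (fun x => (ofLex x).2) h
  have hσ : StrictMono (key ∘ σ) :=
    (Tuple.monotone_sort key).strictMono_of_injective (key_injective.comp σ.injective)
  set e : Fin n ≃ α := σ.trans ω.symm
  have hkey : ∀ i, key (σ i) = toLex (f (e i), σ i) := fun i => rfl
  have he : IsLinext e := fun i j hij => hσ.lt_iff_lt.mp (by simpa [e] using key_lt _ _ hij)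
  refine ⟨fun i => σ i, ⟨e, he, by simp [e]⟩, card_Des_le (g := fun i => f (e i)) ?_ ?_ ?_⟩
  · intro i j hij
    show f (e i) ≤ f (e j)
    have := hσ.monotone hij
    simp only [Function.comp_apply, hkey, Prod.Lex.le_iff, ofLex_toLex] at this
    omega
  · intro i j hij hdes
    have := hσ hij
    simp only [Function.comp_apply, hkey, Prod.Lex.lt_iff, ofLex_toLex] at this
    rcases this with h | ⟨-, h⟩
    · exact h
    · exact absurd hdes (not_lt.mpr h.le)
  · exact fun i => hM _

section UpperChains

variable [PartialOrder α]

def IsMaxChainFrom (b : α) (l : List α) : Prop :=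
  l.head? = some b ∧ l.IsChain (· ⋖ ·) ∧ ∀ x ∈ l.getLast?, IsMax x

noncomputable def maxStrictEdges (ω : α → ℕ) : ℕ :=
  sSup {k | ∃ l : List α, IsMaxChainList l ∧ strictCountUp ω l = k}

noncomputable def maxStrictEdgesFrom (ω : α → ℕ) (b : α) : ℕ :=
  sSup {k | ∃ l, IsMaxChainFrom b l ∧ strictCountUp ω l = k}

theorem IsMaxChainFrom.cons {a b : α} {l : List α} (hl : IsMaxChainFrom b l) (hab : a ⋖ b) :
    IsMaxChainFrom a (a :: l) := by
  obtain ⟨hhead, hchain, hmax⟩ := hl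
  obtain ⟨t, rfl⟩ := List.head?_eq_some_iff.mp hhead
  exact ⟨rfl, hchain.cons_cons hab, by simpa only [List.getLast?_cons_cons] using hmax⟩

theorem IsMaxChainFrom.isMaxChainList {b : α} {l : List α} (hl : IsMaxChainFrom b l)
    (hb : IsMin b) : IsMaxChainList l := by
  obtain ⟨hhead, hchain, hmax⟩ := hl
  obtain ⟨t, rfl⟩ := List.head?_eq_some_iff.mp hhead
  exact ⟨List.cons_ne_nil b t, hchain, by simpa using hb, hmax⟩

theorem exists_isMaxChainFrom [Finite α] (b : α) : ∃ l, IsMaxChainFrom b l := by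
  induction b using WellFoundedGT.induction with
  | _ b ih =>
    by_cases hb : IsMax b
    · exact ⟨[b], rfl, List.isChain_singleton b, by simpa using hb⟩
    · obtain ⟨c, hbc⟩ := exists_covBy_of_wellFoundedLT hb
      obtain ⟨l, hl⟩ := ih c hbc.lt
      exact ⟨b :: l, hl.cons hbc⟩

variable [Fintype α] (ω : α → ℕ)

theorem bddAbove_strictCountUp_isMaxChainList :
    BddAbove {k | ∃ l : List α, IsMaxChainList l ∧ strictCountUp ω l = k} :=
  bddAbove_strictCountUp ω _ fun _ hl => hl.2.1.imp fun _ _ h => h.lt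

theorem bddAbove_strictCountUp_isMaxChainFrom (b : α) :
    BddAbove {k | ∃ l, IsMaxChainFrom b l ∧ strictCountUp ω l = k} :=
  bddAbove_strictCountUp ω _ fun _ hl => hl.2.1.imp fun _ _ h => h.lt

theorem exists_strictCountUp_eq_maxStrictEdgesFrom (b : α) :
    ∃ l, IsMaxChainFrom b l ∧ strictCountUp ω l = maxStrictEdgesFrom ω b := by
  obtain ⟨l, hl⟩ := exists_isMaxChainFrom b
  refine Nat.sSup_mem ?_ (bddAbove_strictCountUp_isMaxChainFrom ω b)
  exact ⟨_, l, hl, rfl⟩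

theorem maxStrictEdgesFrom_covBy {a b : α} (hab : a ⋖ b) :
    maxStrictEdgesFrom ω b + (if ω b < ω a then 1 else 0) ≤ maxStrictEdgesFrom ω a := by
  obtain ⟨l, hl, hcount⟩ := exists_strictCountUp_eq_maxStrictEdgesFrom ω b
  obtain ⟨t, rfl⟩ := List.head?_eq_some_iff.mp hl.1
  refine le_csSup (bddAbove_strictCountUp_isMaxChainFrom ω a) ⟨a :: b :: t, hl.cons hab, ?_⟩
  rw [strictCountUp_cons_cons, hcount]

theorem maxStrictEdgesFrom_le_maxStrictEdges (b : α) :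
    maxStrictEdgesFrom ω b ≤ maxStrictEdges ω := by
  induction b using WellFoundedLT.induction with
  | _ b ih =>
    by_cases hb : IsMin b
    · obtain ⟨l, hl, hcount⟩ := exists_strictCountUp_eq_maxStrictEdgesFrom ω b
      exact le_csSup (bddAbove_strictCountUp_isMaxChainList ω) ⟨l, hl.isMaxChainList hb, hcount⟩
    · obtain ⟨c, hcb⟩ := exists_covBy_of_wellFoundedGT hb
      exact (le_of_add_le_left (maxStrictEdgesFrom_covBy ω hcb)).trans (ih c hcb.lt)

theorem isNatPPart_maxStrictEdges_sub :
    IsNatPPart ω fun b => maxStrictEdges ω - maxStrictEdgesFrom ω b := by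
  refine isNatPPart_of_covBy (fun a b hab => ?_) fun a b hab hω => ?_
  · have := maxStrictEdgesFrom_covBy ω hab
    omega
  · have := maxStrictEdgesFrom_covBy ω hab
    have := maxStrictEdgesFrom_le_maxStrictEdges ω a
    rw [if_pos hω] at *
    omega

end UpperChains

section Compositions

variable {n : ℕ}

theorem mem_compS_iff (c : Composition n) {x : ℕ} :
    x ∈ compS c ↔ ∃ j ∈ c.boundaries, j ≠ 0 ∧ j ≠ Fin.last n ∧ (j : ℕ) = x := by
  have hinj := c.boundary.injective
  simp only [compS, Composition.boundaries, mem_image, mem_range, mem_map, mem_univ, true_and]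
  constructor
  · rintro ⟨i, hi, rfl⟩
    refine ⟨_, ⟨⟨i + 1, by omega⟩, rfl⟩, ?_, ?_, rfl⟩
    · rw [← c.boundary_zero]
      exact hinj.ne (by simp [Fin.ext_iff])
    · rw [← c.boundary_last]
      exact hinj.ne (by simp [Fin.ext_iff]; omega)
  · rintro ⟨_, ⟨m, rfl⟩, h0, hlast, rfl⟩
    have hm0 : (m : ℕ) ≠ 0 := fun h => h0 (by rw [show m = 0 from Fin.ext h]; exact c.boundary_zero)
    have hml : (m : ℕ) ≠ c.length :=
      fun h => hlast (by rw [show m = Fin.last _ from Fin.ext h]; exact c.boundary_last)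
    refine ⟨m - 1, by omega, ?_⟩
    simp [Composition.boundary, Nat.sub_add_cancel (Nat.pos_of_ne_zero hm0)]

theorem exists_compS_eq {S : Finset ℕ} (hS : S ⊆ Ioo 0 n) : ∃ c : Composition n, compS c = S := by
  classical
  let cs : CompositionAsSet n :=
    ⟨univ.filter fun j => j = 0 ∨ j = Fin.last n ∨ (j : ℕ) ∈ S, by simp, by simp⟩
  refine ⟨cs.toComposition, Finset.ext fun x => ?_⟩
  rw [mem_compS_iff, cs.toComposition_boundaries]
  constructor
  · rintro ⟨j, hj, h0, hlast, rfl⟩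
    simpa [cs, h0, hlast] using hj
  · intro hx
    obtain ⟨hx0, hxn⟩ := mem_Ioo.mp (hS hx)
    refine ⟨⟨x, by omega⟩, by simp [cs, hx], ?_, ?_, rfl⟩ <;>
      simp [Fin.ext_iff] <;> omega

end Compositions

section Complement

variable {n : ℕ}

theorem Des_rev {w : Fin n → Fin n} (hw : Function.Injective w) :
    Des (fun i => (w i).rev) = Ioo 0 n \ Des w := by
  ext k
  simp only [Des, mem_sdiff, mem_filter, Fin.rev_lt_rev]
  constructor
  · rintro ⟨hk, hkn, hlt⟩
    exact ⟨hk, fun ⟨_, _, hgt⟩ => hlt.not_gt hgt⟩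
  · rintro ⟨hk, hnot⟩
    obtain ⟨hk0, hkn⟩ := mem_Ioo.mp hk
    have hne : w ⟨k - 1, by omega⟩ ≠ w ⟨k, hkn⟩ := hw.ne (by simp [Fin.ext_iff]; omega)
    exact ⟨hk, hkn, lt_of_le_of_ne (not_lt.mp fun h => hnot ⟨hk, hkn, h⟩) hne⟩

theorem mem_Linext_barLabel [PartialOrder α] (ω : α ≃ Fin n) {w : Fin n → Fin n} :
    w ∈ Linext (barLabel ω) ↔ ∃ w₀ ∈ Linext ω, w = fun i => (w₀ i).rev := by
  constructor
  · rintro ⟨e, he, rfl⟩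
    exact ⟨_, ⟨e, he, rfl⟩, rfl⟩
  · rintro ⟨_, ⟨e, he, rfl⟩, rfl⟩
    exact ⟨e, he, rfl⟩

theorem injective_of_mem_Linext [PartialOrder α] (ω : α ≃ Fin n) {w : Fin n → Fin n}
    (hw : w ∈ Linext ω) : Function.Injective w := by
  obtain ⟨e, -, rfl⟩ := hw
  exact ω.injective.comp e.injective

theorem suppF_barLabel_subset [PartialOrder α] [PartialOrder β] {ω : α ≃ Fin n}
    {τ : β ≃ Fin n} (h : suppF ω ⊆ suppF τ) : suppF (barLabel ω) ⊆ suppF (barLabel τ) := by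
  rintro c ⟨w, hw, hc⟩
  obtain ⟨w₀, hw₀, rfl⟩ := (mem_Linext_barLabel ω).mp hw
  obtain ⟨c₀, hc₀⟩ := exists_compS_eq (Des_subset_Ioo w₀)
  obtain ⟨w₁, hw₁, hc₁⟩ := h ⟨w₀, hw₀, hc₀⟩
  refine ⟨_, (mem_Linext_barLabel τ).mpr ⟨w₁, hw₁, rfl⟩, ?_⟩
  rw [hc, Des_rev (injective_of_mem_Linext ω hw₀), Des_rev (injective_of_mem_Linext τ hw₁),
    ← hc₀, hc₁]

theorem weakCountUp_eq_strictCountUp_barLabel (ω : α ≃ Fin n) (l : List α) :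
    weakCountUp (fun a => (ω a : ℕ)) l = strictCountUp (fun a => (barLabel ω a : ℕ)) l := by
  unfold weakCountUp strictCountUp
  congr 1
  funext p
  simp only [barLabel, finRevEquiv, Equiv.trans_apply, Equiv.coe_fn_mk, Fin.val_rev]
  have := (ω p.1).isLt
  have := (ω p.2).isLt
  exact decide_eq_decide.mpr (by omega)

end Complement

theorem maxStrictEdges_le_of_suppF_subset [PartialOrder α] [PartialOrder β] [Fintype α]
    {n : ℕ} (ω : α ≃ Fin n) (τ : β ≃ Fin n) (h : suppF ω ⊆ suppF τ) :
    maxStrictEdges (fun b => (τ b : ℕ)) ≤ maxStrictEdges (fun a => (ω a : ℕ)) := by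
  obtain ⟨w, hw, hcard⟩ := exists_linext_card_Des_le ω
    (isNatPPart_maxStrictEdges_sub _) fun _ => Nat.sub_le _ _
  obtain ⟨c, hc⟩ := exists_compS_eq (Des_subset_Ioo w)
  obtain ⟨w', hw', hc'⟩ := h ⟨w, hw, hc⟩
  refine csSup_le' ?_
  rintro k ⟨l, hl, rfl⟩
  calc strictCountUp (fun b => (τ b : ℕ)) l
      ≤ (Des w').card := strictCountUp_le_card_Des τ hw' (hl.2.1.imp fun _ _ h => h.lt)
    _ = (Des w).card := by rw [← hc', hc]
    _ ≤ _ := hcard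

end

theorem stmt_9_general {α β : Type*} [PartialOrder α] [PartialOrder β] [Fintype α]
    {n : ℕ} (ω : α ≃ Fin n) (τ : β ≃ Fin n) (h : suppF ω ⊆ suppF τ) :
    (sSup {k | ∃ l : List β, IsMaxChainList l ∧
          strictCountUp (fun p => ((τ p : ℕ))) l = k} ≤
        sSup {k | ∃ l : List α, IsMaxChainList l ∧
          strictCountUp (fun p => ((ω p : ℕ))) l = k}) ∧
    sSup {k | ∃ l : List β, IsMaxChainList l ∧
        weakCountUp (fun p => ((τ p : ℕ))) l = k} ≤
      sSup {k | ∃ l : List α, IsMaxChainList l ∧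
        weakCountUp (fun p => ((ω p : ℕ))) l = k} := by
  have hweak := maxStrictEdges_le_of_suppF_subset _ _ (suppF_barLabel_subset h)
  simp only [maxStrictEdges, ← weakCountUp_eq_strictCountUp_barLabel] at hweak
  exact ⟨maxStrictEdges_le_of_suppF_subset ω τ h, hweak⟩

/-- under `F`-support containment, the maximum number of strict
(resp. weak) edges in a maximal chain of `(P,ω)` is at least that of `(Q,τ)`. -/
theorem stmt_9 {α β : Type*} [PartialOrder α] [PartialOrder β] [Fintype α] [Fintype β]
    {n : ℕ} (ω : α ≃ Fin n) (τ : β ≃ Fin n) (h : suppF ω ⊆ suppF τ) :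
    (sSup {k | ∃ l : List β, IsMaxChainList l ∧
          strictCountUp (fun p => ((τ p : ℕ))) l = k} ≤
        sSup {k | ∃ l : List α, IsMaxChainList l ∧
          strictCountUp (fun p => ((ω p : ℕ))) l = k}) ∧
    sSup {k | ∃ l : List β, IsMaxChainList l ∧
        weakCountUp (fun p => ((τ p : ℕ))) l = k} ≤
      sSup {k | ∃ l : List α, IsMaxChainList l ∧
        weakCountUp (fun p => ((ω p : ℕ))) l = k} :=
  stmt_9_general ω τ h
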